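/- For N random variables each taking values in a set of cardinality K, the binding information satisfies B(X_A) ≤ (N - 1)·(N log K - H(X_A)). -/

import Mathlib

open scoped Classical
open Finset Real

noncomputable section

/-- Probability of the event `X = s` under weights `p` on a finite sample space. -/
def pr {Ω : Type*} [Fintype Ω] (p : Ω → ℝ) {S : Type*} (X : Ω → S) (s : S) : ℝ :=
  ∑ ω, if X ω = s then p ω else 0

/-- Shannon entropy of a finitely-valued random variable `X`. -/
def ent {Ω : Type*} [Fintype Ω] (p : Ω → ℝ) {S : Type*} [Fintype S] (X : Ω → S) : ℝ :=
  ∑ s, Real.negMulLog (pr p X s)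

/-- Conditional entropy `H(X | Y)`. -/
def condEnt {Ω : Type*} [Fintype Ω] (p : Ω → ℝ) {S T : Type*} [Fintype S] [Fintype T]
    (X : Ω → S) (Y : Ω → T) : ℝ :=
  ent p (fun ω => (X ω, Y ω)) - ent p Y

/-- The joint random variable of a finite family. -/
def jointVar {Ω : Type*} {A : Type*} {S : A → Type*} (X : ∀ α, Ω → S α) :
    Ω → ∀ α, S α :=
  fun ω α => X α ω

/-- The tuple of all variables except `α`. -/
def restVar {Ω : Type*} {A : Type*} {S : A → Type*} (X : ∀ α, Ω → S α) (α : A) :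
    Ω → ∀ β : {β : A // β ≠ α}, S β.1 :=
  fun ω β => X β.1 ω

/-- Binding information `B(X_A)`. -/
def bindingInfo {Ω : Type*} [Fintype Ω] (p : Ω → ℝ) {A : Type*} [Fintype A]
    {S : A → Type*} [∀ α, Fintype (S α)] (X : ∀ α, Ω → S α) : ℝ :=
  ent p (jointVar X) - ∑ α, condEnt p (X α) (restVar X α)

/-- Multi-information `I(X_A)`. -/
def multiInfo {Ω : Type*} [Fintype Ω] (p : Ω → ℝ) {A : Type*} [Fintype A]
    {S : A → Type*} [∀ α, Fintype (S α)] (X : ∀ α, Ω → S α) : ℝ :=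
  (∑ α, ent p (X α)) - ent p (jointVar X)

/-!
Since `(X_α, X_{A∖α})` is a relabelling of `X_A`, each conditional entropy is
`H(X_A) - H(X_{A∖α})`, so `B(X_A) = ∑_α H(X_{A∖α}) - (N - 1) H(X_A)`. Each of the `N` tuples
`X_{A∖α}` takes at most `K ^ (N - 1)` values, hence has entropy at most `(N - 1) log K`.
-/

section Entropy

variable {Ω : Type*} [Fintype Ω] {p : Ω → ℝ}

lemma pr_nonneg (hp : ∀ ω, 0 ≤ p ω) {S : Type*} (X : Ω → S) (s : S) : 0 ≤ pr p X s :=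
  Finset.sum_nonneg fun ω _ => by split_ifs <;> simp [hp ω]

lemma sum_pr (hsum : ∑ ω, p ω = 1) {S : Type*} [Fintype S] (X : Ω → S) :
    ∑ s, pr p X s = 1 := by
  rw [← hsum]
  simp only [pr]
  rw [Finset.sum_comm]
  simp

lemma ent_le_log_card (hp : ∀ ω, 0 ≤ p ω) (hsum : ∑ ω, p ω = 1)
    {S : Type*} [Fintype S] (X : Ω → S) : ent p X ≤ Real.log (Fintype.card S) := by
  have hq1 := sum_pr hsum X
  have : Nonempty S := by
    by_contra h
    simp [not_nonempty_iff.mp h] at hq1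
  set n : ℝ := (Fintype.card S : ℝ)
  have hn : 0 < n := by positivity
  -- Jensen's inequality for the concave `negMulLog` with uniform weights `1 / n`
  have jensen := concaveOn_negMulLog.le_map_sum (t := Finset.univ) (w := fun _ => 1 / n)
    (p := pr p X) (fun _ _ => by positivity) (by simp [n, hn.ne']) fun s _ => pr_nonneg hp X s
  simp only [smul_eq_mul, ← Finset.mul_sum, hq1, mul_one] at jensen
  rw [Real.negMulLog, one_div, Real.log_inv, ← ent] at jensen
  nlinarith [inv_mul_cancel₀ hn.ne']

lemma ent_comp_equiv {S T : Type*} [Fintype S] [Fintype T] (e : S ≃ T) (X : Ω → S) :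
    ent p (e ∘ X) = ent p X := by
  rw [ent, ← e.sum_comp]
  refine Finset.sum_congr rfl fun s _ => ?_
  simp [pr, e.injective.eq_iff]

end Entropy

section Binding

variable {Ω : Type*} [Fintype Ω] {p : Ω → ℝ} {A : Type*} [Fintype A]
  {S : A → Type*} [∀ α, Fintype (S α)]

lemma condEnt_restVar (X : ∀ α, Ω → S α) (α : A) :
    condEnt p (X α) (restVar X α) = ent p (jointVar X) - ent p (restVar X α) := by
  rw [condEnt, ← ent_comp_equiv (Equiv.piSplitAt α S) (jointVar X)]
  rfl

lemma bindingInfo_eq_sum_ent_restVar (X : ∀ α, Ω → S α) :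
    bindingInfo p X =
      ∑ α, ent p (restVar X α) - (Fintype.card A - 1) * ent p (jointVar X) := by
  simp only [bindingInfo, condEnt_restVar, Finset.sum_sub_distrib, Finset.sum_const,
    Finset.card_univ, nsmul_eq_mul]
  ring

lemma ent_restVar_le (hp : ∀ ω, 0 ≤ p ω) (hsum : ∑ ω, p ω = 1) {K : ℕ}
    (hK : ∀ α, Fintype.card (S α) = K) (X : ∀ α, Ω → S α) (α : A) :
    ent p (restVar X α) ≤ (Fintype.card A - 1) * Real.log K := by
  have hcard : Fintype.card (∀ β : {β : A // β ≠ α}, S β.1) = K ^ (Fintype.card A - 1) := by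
    simp [Fintype.card_pi, hK, Fintype.card_subtype_compl]
  have hA : 1 ≤ Fintype.card A := Fintype.card_pos_iff.mpr ⟨α⟩
  calc ent p (restVar X α) ≤ Real.log (K ^ (Fintype.card A - 1) : ℕ) :=
        hcard ▸ ent_le_log_card hp hsum _
    _ = (Fintype.card A - 1) * Real.log K := by
        rw [Nat.cast_pow, Real.log_pow, Nat.cast_sub hA, Nat.cast_one]

end Binding

theorem bindingInfo_le_bound_general {Ω : Type*} [Fintype Ω] (p : Ω → ℝ)
    (hp : ∀ ω, 0 ≤ p ω) (hsum : ∑ ω, p ω = 1)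
    {A : Type*} [Fintype A]
    {S : A → Type*} [∀ α, Fintype (S α)]
    (K : ℕ) (hK : ∀ α, Fintype.card (S α) = K)
    (X : ∀ α, Ω → S α) :
    bindingInfo p X ≤ ((Fintype.card A : ℝ) - 1) *
      ((Fintype.card A : ℝ) * Real.log K - ent p (jointVar X)) := by
  have hsum_rest : ∑ α, ent p (restVar X α) ≤
      Fintype.card A * ((Fintype.card A - 1) * Real.log K) :=
    calc ∑ α, ent p (restVar X α) ≤ ∑ _α : A, (Fintype.card A - 1) * Real.log K :=
          Finset.sum_le_sum fun α _ => ent_restVar_le hp hsum hK X α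
      _ = _ := by rw [Finset.sum_const, Finset.card_univ, nsmul_eq_mul]
  rw [bindingInfo_eq_sum_ent_restVar]
  linarith

/-- `B(X_A) ≤ (N - 1)(N log K - H(X_A))`. -/
theorem bindingInfo_le_bound {Ω : Type*} [Fintype Ω] (p : Ω → ℝ)
    (hp : ∀ ω, 0 ≤ p ω) (hsum : ∑ ω, p ω = 1)
    {A : Type*} [Fintype A] (hA : 1 ≤ Fintype.card A)
    {S : A → Type*} [∀ α, Fintype (S α)]
    (K : ℕ) (hK : ∀ α, Fintype.card (S α) = K)
    (X : ∀ α, Ω → S α) :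
    bindingInfo p X ≤ ((Fintype.card A : ℝ) - 1) *
      ((Fintype.card A : ℝ) * Real.log K - ent p (jointVar X)) :=
  bindingInfo_le_bound_general p hp hsum K hK X
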